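/- Let (V,E) be a triangulation of ℝ^d with the Delaunay property, and suppose that V ∩ B_r(q) = εRℤ^d ∩ B_r(q) for some ε > 0, R ∈ SO(d), and ball B_r(q). If e ∈ E is an element satisfying e ∩ B_{r−√d·ε}(q) ≠ ∅, then there is a unique y ∈ εR(ℤ+1/2)^d such that the vertex set of e is contained in y + εR{−1/2, 1/2}^d, and the circumscribed sphere of e is ∂B_{ε√d/2}(y). -/

import Mathlib

open MeasureTheory Metric Set
open scoped ENNReal NNReal Classical

noncomputable section

/-- Euclidean space `ℝ^d`. -/
abbrev Euc (d : ℕ) := EuclideanSpace ℝ (Fin d)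

def toE {d : ℕ} (v : Fin d → ℝ) : Euc d := (WithLp.equiv 2 (Fin d → ℝ)).symm v

def ofE {d : ℕ} (x : Euc d) : Fin d → ℝ := WithLp.equiv 2 (Fin d → ℝ) x

/-- The ℓ^p norm of a vector in `ℝ^d`, for `p ∈ [1,∞]`. -/
def lpNorm {d : ℕ} (p : ℝ≥0∞) (v : Fin d → ℝ) : ℝ :=
  if p = ∞ then ⨆ i, |v i| else (∑ i, |v i| ^ p.toReal) ^ (1 / p.toReal)

/-- The square root `√A` of a positive semidefinite matrix (the former `Matrix.PosSemidef.sqrt`). -/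
def psdSqrt {d : ℕ} {A : Matrix (Fin d) (Fin d) ℝ} (hA : A.PosSemidef) : Matrix (Fin d) (Fin d) ℝ :=
  hA.1.eigenvectorUnitary.1 * Matrix.diagonal ((↑) ∘ (√·) ∘ hA.1.eigenvalues) *
    (star hA.1.eigenvectorUnitary : Matrix (Fin d) (Fin d) ℝ)

theorem psdSqrt_isHermitian {d : ℕ} {A : Matrix (Fin d) (Fin d) ℝ} (hA : A.PosSemidef) :
    (psdSqrt hA).IsHermitian := by
  unfold psdSqrt
  rw [Matrix.star_eq_conjTranspose]
  exact Matrix.isHermitian_mul_mul_conjTranspose _ (Matrix.isHermitian_diagonal _)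

/-- Singular values of a real `d×d` matrix: eigenvalues of `√(MᵀM)`. -/
def singularValues {d : ℕ} (M : Matrix (Fin d) (Fin d) ℝ) : Fin d → ℝ :=
  (psdSqrt_isHermitian (Matrix.posSemidef_conjTranspose_mul_self M)).eigenvalues

/-- The Schatten `p`-norm: ℓ^p norm of the vector of singular values. -/
def schattenNorm {d : ℕ} (p : ℝ≥0∞) (M : Matrix (Fin d) (Fin d) ℝ) : ℝ :=
  lpNorm p (singularValues M)

/-- The conjugate exponent `p*` of `p ∈ [1,∞]`, with `1/p + 1/p* = 1`. -/
def dualExp (p : ℝ≥0∞) : ℝ≥0∞ :=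
  if p = 1 then ∞ else if p = ∞ then 1 else ENNReal.ofReal (p.toReal / (p.toReal - 1))

/-- The partial derivative `∂ᵢ φ`. -/
def epd {d : ℕ} (i : Fin d) (φ : Euc d → ℝ) (x : Euc d) : ℝ :=
  fderiv ℝ φ x (EuclideanSpace.single i 1)

/-- A smooth test function compactly supported inside `A`. -/
def IsTestFun {d : ℕ} (A : Set (Euc d)) (φ : Euc d → ℝ) : Prop :=
  ContDiff ℝ (⊤ : ℕ∞) φ ∧ HasCompactSupport φ ∧ tsupport φ ⊆ A

/-- The `p`-Hessian–Schatten total variation of `f` on `A`: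
`sup { ∫_A ∑_{i,j} f ∂ᵢ∂ⱼ F_{ij} }` over smooth matrix fields `F` compactly supported in `A`
with `‖F‖_{p*,∞} ≤ 1`. -/
def HSV {d : ℕ} (p : ℝ≥0∞) (f : Euc d → ℝ) (A : Set (Euc d)) : ℝ≥0∞ :=
  ⨆ (F : Fin d → Fin d → Euc d → ℝ) (_ : (∀ i j, IsTestFun A (F i j)) ∧
      ∀ x, schattenNorm (dualExp p) (Matrix.of fun i j => F i j x) ≤ 1),
    ENNReal.ofReal (∫ x in A, ∑ i, ∑ j, f x * epd i (epd j (F i j)) x)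

/-- A triangulation of `ℝ^d`: vertices `V`, elements `E` (nondegenerate `d`-simplexes,
with vertex set `verts e`), any two elements meeting in the convex hull of their common
vertices, covering `ℝ^d`. -/
structure Triangulation (d : ℕ) where
  V : Set (Euc d)
  E : Set (Set (Euc d))
  verts : Set (Euc d) → Finset (Euc d)
  interior_nonempty : ∀ e ∈ E, (interior e).Nonempty
  card_verts : ∀ e ∈ E, (verts e).card = d + 1
  eq_hull : ∀ e ∈ E, e = convexHull ℝ (verts e : Set (Euc d))
  V_eq : V = ⋃ e ∈ E, (verts e : Set (Euc d))
  inter_eq : ∀ e ∈ E, ∀ e' ∈ E, e ∩ e' = convexHull ℝ ((verts e ∩ verts e' : Finset (Euc d)) : Set (Euc d))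
  covers : ⋃ e ∈ E, e = Set.univ

/-- The Delaunay property: any open ball whose boundary sphere contains the vertex set of an
element contains no vertex of the triangulation. -/
def Delaunay {d : ℕ} (T : Triangulation d) : Prop :=
  ∀ e ∈ T.E, ∀ (c : Euc d) (ρ : ℝ), (↑(T.verts e) : Set (Euc d)) ⊆ Metric.sphere c ρ →
    Metric.ball c ρ ∩ T.V = ∅


section AuxiliaryLemmas

open Matrix

/-- The map `w ↦ εR w` as a map `(Fin d → ℝ) → Euc d`. -/
def phi {d : ℕ} (ε : ℝ) (R : Matrix (Fin d) (Fin d) ℝ) (w : Fin d → ℝ) : Euc d :=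
  toE (ε • R.mulVec w)

section phiLemmas
variable {d : ℕ} {R : Matrix (Fin d) (Fin d) ℝ} (hR : R * R.transpose = 1) {ε : ℝ}

include hR in
lemma mulVec_dot (v : Fin d → ℝ) :
    (R.mulVec v) ⬝ᵥ (R.mulVec v) = v ⬝ᵥ v := by
  have hR' : R.transpose * R = 1 := mul_eq_one_comm.mp hR
  rw [Matrix.dotProduct_mulVec, ← Matrix.mulVec_transpose, Matrix.mulVec_mulVec, hR',
    Matrix.one_mulVec]

include hR in
lemma dist_phi (a b : Fin d → ℝ) :
    dist (phi ε R a) (phi ε R b) = |ε| * Real.sqrt (∑ i, (a i - b i)^2) := by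
  rw [EuclideanSpace.dist_eq]
  simp_rw [Real.dist_eq, sq_abs]
  have h1 : ∀ i, phi ε R a i - phi ε R b i = ε * (R.mulVec (a - b)) i := by
    intro i
    simp [phi, toE, Matrix.mulVec_sub, mul_sub, Pi.sub_apply]
  have h2 : ∑ i, (phi ε R a i - phi ε R b i)^2 = ε^2 * ∑ i, ((a - b) i)^2 := by
    simp only [h1, mul_pow]
    rw [← Finset.mul_sum]
    congr 1
    have := mulVec_dot hR (a - b)
    simpa only [dotProduct, pow_two, Pi.sub_apply] using this
  rw [h2, Real.sqrt_mul (sq_nonneg ε), Real.sqrt_sq_eq_abs]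
  simp [Pi.sub_apply]

lemma phi_add (w s : Fin d → ℝ) : phi ε R (w + s) = phi ε R w + phi ε R s := by
  simp [phi, Matrix.mulVec_add, smul_add, toE]

include hR in
lemma phi_surj (hε : ε ≠ 0) (x : Euc d) :
    phi ε R (ε⁻¹ • R.transpose.mulVec (fun i => x i)) = x := by
  unfold phi
  rw [Matrix.mulVec_smul, smul_smul, mul_inv_cancel₀ hε, one_smul,
    Matrix.mulVec_mulVec, hR, Matrix.one_mulVec]
  rfl

end phiLemmas

lemma round_min (x : ℝ) (z : ℤ) : |x - round x| ≤ |x - (z:ℝ)| := by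
  rcases eq_or_ne z (round x) with rfl|h
  · rfl
  · have h1 : (1:ℝ) ≤ |(round x : ℝ) - z| := by
      have : round x - z ≠ 0 := sub_ne_zero.2 (by exact_mod_cast (Ne.symm h))
      calc (1:ℝ) = ((1:ℤ):ℝ) := by norm_num
      _ ≤ |((round x - z : ℤ) : ℝ)| := by exact_mod_cast Int.one_le_abs (by exact_mod_cast this)
      _ = |(round x : ℝ) - z| := by push_cast; ring_nf
    have h2 : |x - round x| ≤ 1/2 := abs_sub_round x
    have h3 : |(round x:ℝ) - z| ≤ |x - round x| + |x - z| := by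
      calc |(round x:ℝ) - z| = |((round x:ℝ) - x) - ((z:ℝ) - x)| := by ring_nf
        _ ≤ |(round x:ℝ) - x| + |(z:ℝ) - x| := abs_sub _ _
        _ = |x - round x| + |x - z| := by rw [abs_sub_comm ((round x:ℝ)) x, abs_sub_comm ((z:ℝ)) x]
    linarith

lemma exists_simplex {d : ℕ} (s : Finset (Euc d)) (hcard : s.card = d + 1)
    (hspan : affineSpan ℝ (s : Set (Euc d)) = ⊤) :
    ∃ S : Affine.Simplex ℝ (Euc d) d, Set.range S.points = (s : Set (Euc d)) := by
  have equiv := s.equivFinOfCardEq hcard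
  set p : Fin (d+1) → Euc d := fun k => (equiv.symm k : Euc d) with hp
  have hrange : Set.range p = (s : Set (Euc d)) := by
    ext x
    constructor
    · rintro ⟨k, rfl⟩; exact (equiv.symm k).2
    · intro hx; exact ⟨equiv ⟨x, hx⟩, by simp [hp]⟩
  have hfr : Module.finrank ℝ (vectorSpan ℝ (Set.range p)) = d := by
    rw [hrange, ← direction_affineSpan, hspan, AffineSubspace.direction_top]
    simp [finrank_euclideanSpace]
  have hind : AffineIndependent ℝ p := by
    exact (affineIndependent_iff_finrank_vectorSpan_eq ℝ p (Fintype.card_fin _)).mpr hfr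
  exact ⟨⟨p, hind⟩, hrange⟩

lemma const_on_span {d : ℕ} (g : Euc d → ℝ)
    (hg : ∀ (c : ℝ) (p1 p2 p3 : Euc d), g (c • (p1 - p2) + p3) = c * (g p1 - g p2) + g p3)
    (s : Set (Euc d)) (hspan : affineSpan ℝ s = ⊤) (a : ℝ)
    (h : ∀ x ∈ s, g x = a) (x : Euc d) : g x = a := by
  set A : AffineSubspace ℝ (Euc d) :=
    { carrier := {x | g x = a}
      smul_vsub_vadd_mem' := by
        intro c p1 p2 p3 h1 h2 h3
        simp only [Set.mem_setOf_eq] at *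
        show g (c • (p1 - p2) + p3) = a
        rw [hg, h1, h2, h3]; ring } with hA
  have hle : affineSpan ℝ s ≤ A := affineSpan_le.2 h
  rw [hspan] at hle
  exact hle (AffineSubspace.mem_top ℝ _ x)

end AuxiliaryLemmas

set_option maxHeartbeats 1000000 in
/-- Let `(V,E)` be a Delaunay triangulation of `ℝ^d` with
`V ∩ B_r(q) = εRℤ^d ∩ B_r(q)` for some `ε > 0`, `R ∈ SO(d)`.  If `e ∈ E` meets
`B_{r−√d·ε}(q)`, then there is a unique `y ∈ εR(ℤ+1/2)^d` such that the vertex set of `e` is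
contained in `y + εR{−1/2,1/2}^d`; it is characterized by `v_e ⊆ ∂B_{ε√d/2}(y)`. -/
theorem delaunay_lattice_elements {d : ℕ} (T : Triangulation d) (hDel : Delaunay T)
    (ε : ℝ) (hε : 0 < ε) (R : Matrix (Fin d) (Fin d) ℝ)
    (hR : R * R.transpose = 1) (hdet : R.det = 1) (q : Euc d) (r : ℝ)
    (hV : T.V ∩ Metric.ball q r =
      {y : Euc d | ∃ z : Fin d → ℤ, y = toE (ε • R.mulVec fun i => (z i : ℝ))} ∩
        Metric.ball q r)
    (e : Set (Euc d)) (he : e ∈ T.E)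
    (hmeets : (e ∩ Metric.ball q (r - Real.sqrt d * ε)).Nonempty) :
    ∃! y : Euc d,
      (∃ z : Fin d → ℤ, y = toE (ε • R.mulVec fun i => (z i : ℝ) + 1 / 2)) ∧
      (∀ x ∈ T.verts e, ∃ s : Fin d → Bool,
        x = y + toE (ε • R.mulVec fun i => if s i then (1 : ℝ) / 2 else -(1 / 2))) ∧
      (↑(T.verts e) : Set (Euc d)) ⊆ Metric.sphere y (ε * Real.sqrt d / 2) := by
  classical
  obtain ⟨x, hxe, hxq⟩ := hmeets
  have hε0 : (ε:ℝ) ≠ 0 := ne_of_gt hε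
  have habs : |ε| = ε := abs_of_pos hε
  set sd := Real.sqrt d with hsd
  have hsd0 : (0:ℝ) ≤ sd := Real.sqrt_nonneg _
  have hsd2 : sd ^ 2 = d := Real.sq_sqrt (Nat.cast_nonneg d)
  clear_value sd
  -- simplex machinery
  have hconv : Convex ℝ e := by rw [T.eq_hull e he]; exact convex_convexHull ℝ _
  have hspan : affineSpan ℝ ((T.verts e : Set (Euc d))) = ⊤ := by
    have h1 : affineSpan ℝ e = ⊤ := by
      rw [← hconv.interior_nonempty_iff_affineSpan_eq_top]
      exact T.interior_nonempty e he
    rw [T.eq_hull e he, affineSpan_convexHull] at h1; exact h1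
  obtain ⟨S, hSrange⟩ := exists_simplex (T.verts e) (T.card_verts e he) hspan
  set c := S.circumcenter with hc
  set ρ := S.circumradius with hρdef
  have hsph : ∀ v ∈ T.verts e, dist v c = ρ := by
    intro v hv
    have hv' : v ∈ Set.range S.points := by rw [hSrange]; exact Finset.mem_coe.2 hv
    obtain ⟨k, hk⟩ := hv'
    rw [← hk]
    exact S.dist_circumcenter_eq_circumradius k
  have hempty : Metric.ball c ρ ∩ T.V = ∅ :=
    hDel e he c ρ (fun v hv => Metric.mem_sphere.2 (hsph v hv))
  have heball : e ⊆ Metric.closedBall c ρ := by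
    rw [T.eq_hull e he]
    exact convexHull_min (fun v hv => Metric.mem_closedBall.2 (hsph v hv).le)
      (convex_closedBall c ρ)
  have hxc : dist x c ≤ ρ := Metric.mem_closedBall.1 (heball hxe)
  clear_value ρ
  have hρ0 : 0 ≤ ρ := dist_nonneg.trans hxc
  have hxqr : dist x q < r - sd * ε := Metric.mem_ball.1 hxq
  have hsde : sd * ε = ε * sd := mul_comm _ _
  -- generic covering estimate: every point has a lattice point within ε√d/2
  have hcover : ∀ u : Euc d, dist (phi ε R
      (fun i => ((round ((ε⁻¹ • R.transpose.mulVec (fun j => u j)) i) : ℤ) : ℝ))) u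
      ≤ ε * sd / 2 := by
    intro u
    set w : Fin d → ℝ := ε⁻¹ • R.transpose.mulVec (fun j => u j) with hw
    have hu : phi ε R w = u := phi_surj hR hε0 u
    conv_lhs => rw [← hu]
    rw [dist_phi hR, habs]
    have hsum : (∑ i, (((round (w i):ℤ):ℝ) - w i)^2) ≤ (sd/2)^2 := by
      have hterm : ∀ i ∈ Finset.univ, (((round (w i):ℤ):ℝ) - w i)^2 ≤ (1:ℝ)/4 := by
        intro i _
        have h2 : |w i - round (w i)| ≤ 1/2 := abs_sub_round (w i)
        have h3 : (((round (w i):ℤ):ℝ) - w i)^2 = |w i - round (w i)|^2 := by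
          rw [sq_abs]; ring
        rw [h3]
        nlinarith [abs_nonneg (w i - round (w i))]
      calc (∑ i, (((round (w i):ℤ):ℝ) - w i)^2) ≤ ∑ _i : Fin d, (1:ℝ)/4 :=
            Finset.sum_le_sum hterm
        _ = (d : ℝ) * (1/4) := by simp [Finset.sum_const]
        _ = (sd/2)^2 := by rw [div_pow, hsd2]; ring
    have := Real.sqrt_le_sqrt hsum
    rw [Real.sqrt_sq (by positivity)] at this
    calc ε * Real.sqrt (∑ i, (((round (w i):ℤ):ℝ) - w i)^2) ≤ ε * (sd/2) := by
          exact mul_le_mul_of_nonneg_left this hε.le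
      _ = ε * sd / 2 := by ring
  -- the lattice membership transfer
  have hlat : ∀ p : Euc d, (∃ z : Fin d → ℤ, p = phi ε R (fun i => (z i : ℝ))) →
      p ∈ Metric.ball q r → p ∈ T.V := by
    intro p hz hp
    have : p ∈ ({y : Euc d | ∃ z : Fin d → ℤ,
        y = toE (ε • R.mulVec fun i => (z i : ℝ))} ∩ Metric.ball q r) := ⟨hz, hp⟩
    rw [← hV] at this
    exact this.1
  -- Step 1 : ρ ≤ ε * sd / 2
  have hρle : ρ ≤ ε * sd / 2 := by
    by_contra hlt
    push_neg at hlt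
    have hρpos : 0 < ρ := lt_of_le_of_lt (by positivity) hlt
    -- find x' in the open ball close to x
    have hxcl : x ∈ closure (Metric.ball c ρ) := by
      rw [closure_ball c (ne_of_gt hρpos)]
      exact heball hxe
    have hη : 0 < r - sd * ε - dist x q := by linarith
    obtain ⟨x', hx'ball, hx'dist⟩ := Metric.mem_closure_iff.1 hxcl _ hη
    rw [dist_comm] at hx'dist
    have hD : dist x' c < ρ := Metric.mem_ball.1 hx'ball
    set D := dist x' c with hDdef
    have hD0 : 0 ≤ D := dist_nonneg
    -- the point c'' on the segment from x' to c
    set t : ℝ := if D ≤ ε * sd / 2 then 1 else (ε * sd / 2) / D with ht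
    have ht0 : 0 ≤ t := by
      rw [ht]; split
      · norm_num
      · positivity
    have ht1 : t ≤ 1 := by
      rw [ht]; split
      · exact le_refl 1
      · rename_i hcase
        push_neg at hcase
        rw [div_le_one (by linarith [mul_nonneg hε.le hsd0])]
        linarith
    set c'' := AffineMap.lineMap x' c t with hc''
    have hdxc'' : dist c'' x' ≤ ε * sd / 2 := by
      rw [hc'', dist_lineMap_left, Real.norm_eq_abs, abs_of_nonneg ht0]
      rw [ht]; split
      · rename_i hcase; simpa using hcase
      · rename_i hcase
        push_neg at hcase
        rw [div_mul_eq_mul_div, mul_div_assoc]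
        rw [div_self (ne_of_gt (lt_of_le_of_lt (by positivity) hcase))]
        simp
    have hdc''c : dist c'' c ≤ max 0 (D - ε * sd / 2) := by
      rw [hc'', dist_lineMap_right, Real.norm_eq_abs, abs_of_nonneg (by linarith)]
      rw [ht]; split
      · simp
      · rename_i hcase
        push_neg at hcase
        have hDpos : 0 < D := lt_of_le_of_lt (by positivity) hcase
        have : (1 - ε * sd / 2 / D) * D = D - ε * sd / 2 := by
          field_simp
        rw [← hDdef, this]
        exact le_max_right _ _
    -- the lattice point near c''
    set p := phi ε R (fun i =>
      ((round ((ε⁻¹ • R.transpose.mulVec (fun j => c'' j)) i) : ℤ) : ℝ)) with hp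
    have hpc'' : dist p c'' ≤ ε * sd / 2 := hcover c''
    have hpc : dist p c < ρ := by
      have h1 : dist p c ≤ dist p c'' + dist c'' c := dist_triangle _ _ _
      have h2 : max 0 (D - ε * sd / 2) < ρ - ε * sd / 2 :=
        max_lt (by linarith) (by linarith)
      calc dist p c ≤ dist p c'' + dist c'' c := h1
        _ ≤ ε * sd / 2 + max 0 (D - ε * sd / 2) := add_le_add hpc'' hdc''c
        _ < ε * sd / 2 + (ρ - ε * sd / 2) := by linarith
        _ = ρ := by ring
    have hpq : dist p q < r := by
      have t1 : dist p q ≤ dist p c'' + dist c'' x' + dist x' q := dist_triangle4 _ _ _ _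
      have t2 : dist x' q ≤ dist x' x + dist x q := dist_triangle _ _ _
      have hdc''x' : dist c'' x' ≤ ε * sd / 2 := hdxc''
      linarith
    have hpV : p ∈ T.V := by
      apply hlat p _ (Metric.mem_ball.2 hpq)
      exact ⟨fun i => round ((ε⁻¹ • R.transpose.mulVec (fun j => c'' j)) i), rfl⟩
    have : p ∈ Metric.ball c ρ ∩ T.V := ⟨Metric.mem_ball.2 hpc, hpV⟩
    rw [hempty] at this
    exact this
  -- Step 2 : vertices are in the ball B_r(q), hence lattice points
  have hvball : ∀ v ∈ T.verts e, v ∈ Metric.ball q r := by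
    intro v hv
    have h1 : dist v q ≤ dist v c + dist c x + dist x q := dist_triangle4 v c x q
    have h2 : dist c x ≤ ρ := by rw [dist_comm]; exact hxc
    have h3 := hsph v hv
    rw [Metric.mem_ball]
    linarith
  -- representation of the circumcenter
  set w : Fin d → ℝ := ε⁻¹ • R.transpose.mulVec (fun j => c j) with hw
  have hcw : phi ε R w = c := phi_surj hR hε0 c
  set p₀ := phi ε R (fun i => ((round (w i) : ℤ) : ℝ)) with hp₀
  have hp₀Λ : ∃ z : Fin d → ℤ, p₀ = phi ε R (fun i => (z i : ℝ)) :=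
    ⟨fun i => round (w i), hp₀⟩
  have hp₀c : dist p₀ c ≤ ε * sd / 2 := hcover c
  clear_value w p₀
  have hp₀q : dist p₀ q < r := by
    have h1 : dist p₀ q ≤ dist p₀ c + dist c x + dist x q := dist_triangle4 _ _ _ _
    have h2 : dist c x ≤ ρ := by rw [dist_comm]; exact hxc
    linarith
  -- Step 3 : ρ ≤ dist p₀ c
  have hρle2 : ρ ≤ dist p₀ c := by
    by_contra hlt2
    push_neg at hlt2
    have hpV : p₀ ∈ T.V := hlat p₀ hp₀Λ (Metric.mem_ball.2 hp₀q)
    have : p₀ ∈ Metric.ball c ρ ∩ T.V := ⟨Metric.mem_ball.2 hlt2, hpV⟩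
    rw [hempty] at this
    exact this
  -- Step 4 : integer coordinates of the vertices
  have hvz : ∀ v ∈ T.verts e, ∃ z : Fin d → ℤ, v = phi ε R (fun i => (z i : ℝ)) := by
    intro v hv
    have hvV : v ∈ T.V := by
      rw [T.V_eq]
      exact Set.mem_biUnion he (Finset.mem_coe.2 hv)
    have hmem : v ∈ T.V ∩ Metric.ball q r := ⟨hvV, hvball v hv⟩
    rw [hV] at hmem
    exact hmem.1
  choose! zv hzv using hvz
  -- Step 5 : per-coordinate equality of squares
  have hsq : ∀ v ∈ T.verts e, ∀ i,
      (((round (w i) : ℤ) : ℝ) - w i)^2 = ((zv v i : ℝ) - w i)^2 := by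
    intro v hv
    have hver : dist v c = ρ := hsph v hv
    have hd1 : dist v c = ε * Real.sqrt (∑ i, ((zv v i : ℝ) - w i)^2) := by
      conv_lhs => rw [hzv v hv, ← hcw]
      rw [dist_phi hR, habs]
    have hd2 : dist p₀ c = ε * Real.sqrt (∑ i, (((round (w i) : ℤ) : ℝ) - w i)^2) := by
      rw [hp₀]
      conv_lhs => rw [← hcw]
      rw [dist_phi hR, habs]
    have hle : ∀ i ∈ Finset.univ, (((round (w i):ℤ):ℝ) - w i)^2 ≤ ((zv v i:ℝ) - w i)^2 := by
      intro i _
      have hmin := round_min (w i) (zv v i)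
      have e1 : (((round (w i):ℤ):ℝ) - w i)^2 = |w i - ((round (w i):ℤ):ℝ)|^2 := by
        rw [sq_abs]; ring
      have e2 : ((zv v i:ℝ) - w i)^2 = |w i - (zv v i:ℝ)|^2 := by
        rw [sq_abs]; ring
      rw [e1, e2]
      exact pow_le_pow_left₀ (abs_nonneg _) hmin 2
    have hsums : ∑ i, (((round (w i):ℤ):ℝ) - w i)^2 = ∑ i, ((zv v i:ℝ) - w i)^2 := by
      have hs1 : Real.sqrt (∑ i, (((round (w i):ℤ):ℝ) - w i)^2)
          ≤ Real.sqrt (∑ i, ((zv v i:ℝ) - w i)^2) := Real.sqrt_le_sqrt (Finset.sum_le_sum hle)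
      have hs2 : Real.sqrt (∑ i, ((zv v i:ℝ) - w i)^2)
          ≤ Real.sqrt (∑ i, (((round (w i):ℤ):ℝ) - w i)^2) := by
        have hB : ε * Real.sqrt (∑ i, ((zv v i:ℝ) - w i)^2)
            ≤ ε * Real.sqrt (∑ i, (((round (w i):ℤ):ℝ) - w i)^2) := by
          rw [← hd1, ← hd2, hver]
          exact hρle2
        exact le_of_mul_le_mul_left hB hε
      have hs3 := le_antisymm hs1 hs2
      have hinj := congrArg (fun t => t^2) hs3
      rwa [Real.sq_sqrt (by positivity), Real.sq_sqrt (by positivity)] at hinj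
    exact fun i =>
      (Finset.sum_eq_sum_iff_of_le hle).1 hsums i (Finset.mem_univ i)
  have hverts_ne : (T.verts e).Nonempty :=
    Finset.card_pos.1 (by rw [T.card_verts e he]; omega)
  -- Step 6 : every coordinate of w is a half-integer, and δ² = 1/4
  have hhalf : ∀ i, ∃ mi : ℤ, w i = (mi : ℝ) + 1/2 ∧
      (((round (w i) : ℤ) : ℝ) - w i)^2 = 1/4 := by
    intro i
    have hnc : ∃ v₁ ∈ T.verts e, ∃ v₂ ∈ T.verts e, zv v₁ i ≠ zv v₂ i := by
      by_contra hcon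
      push_neg at hcon
      obtain ⟨v₀, hv₀⟩ := hverts_ne
      set a : ℤ := zv v₀ i with ha
      set g : Euc d → ℝ := fun x => (R.transpose.mulVec (fun j => x j)) i with hg
      have hglin : ∀ (t : ℝ) (p1 p2 p3 : Euc d),
          g (t • (p1 - p2) + p3) = t * (g p1 - g p2) + g p3 := by
        intro t p1 p2 p3
        simp only [hg]
        have harg : (fun j => (t • (p1 - p2) + p3) j)
            = t • ((fun j => p1 j) - fun j => p2 j) + fun j => p3 j := by
          funext j
          simp [Pi.add_apply, Pi.smul_apply, Pi.sub_apply]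
        rw [harg, Matrix.mulVec_add, Matrix.mulVec_smul, Matrix.mulVec_sub]
        simp [mul_sub]
      have hgphi : ∀ u : Fin d → ℝ, g (phi ε R u) = ε * u i := by
        intro u
        simp only [hg, phi]
        have h1 : (fun j => (toE (ε • R.mulVec u)) j) = ε • R.mulVec u := rfl
        rw [h1, Matrix.mulVec_smul, Matrix.mulVec_mulVec, mul_eq_one_comm.mp hR,
          Matrix.one_mulVec]
        simp
      have hgconst : ∀ x ∈ (T.verts e : Set (Euc d)), g x = ε * (a : ℝ) := by
        intro x hx
        have hxv := Finset.mem_coe.1 hx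
        rw [hzv x hxv, hgphi]
        have : zv x i = a := hcon x hxv v₀ hv₀
        rw [this]
      have hall := const_on_span g hglin _ hspan (ε * (a : ℝ)) hgconst
      have hx1 := hall (phi ε R (fun _ => (a : ℝ) + 1))
      rw [hgphi] at hx1
      have : (a : ℝ) + 1 = a := mul_left_cancel₀ hε0 hx1
      linarith
    obtain ⟨v₁, hv₁, v₂, hv₂, hne⟩ := hnc
    have e₁ := (hsq v₁ hv₁ i).symm
    have e₂ := (hsq v₂ hv₂ i).symm
    set z1 : ℝ := (zv v₁ i : ℝ) with hz1
    set z2 : ℝ := (zv v₂ i : ℝ) with hz2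
    have hz12 : z1 ≠ z2 := by
      rw [hz1, hz2]
      exact_mod_cast hne
    have hge1 : (1:ℝ) ≤ |z1 - z2| := by
      rw [hz1, hz2]
      have : zv v₁ i - zv v₂ i ≠ 0 := sub_ne_zero.2 hne
      calc (1:ℝ) = ((1:ℤ):ℝ) := by norm_num
        _ ≤ |((zv v₁ i - zv v₂ i : ℤ) : ℝ)| := by
            exact_mod_cast Int.one_le_abs this
        _ = |(zv v₁ i : ℝ) - (zv v₂ i : ℝ)| := by push_cast; ring_nf
    clear_value z1 z2
    have hcases := sq_eq_sq_iff_eq_or_eq_neg.1 (e₁.trans e₂.symm)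
    have hmid : z1 - w i = -(z2 - w i) := by
      rcases hcases with h | h
      · exfalso; apply hz12; linarith
      · exact h
    have hub : (z1 - w i)^2 ≤ 1/4 := by
      rw [e₁]
      have hr2 : |w i - round (w i)| ≤ 1/2 := abs_sub_round (w i)
      nlinarith [abs_nonneg (w i - ((round (w i):ℤ):ℝ)), sq_abs (w i - ((round (w i):ℤ):ℝ))]
    have hlin : z1 - z2 = 2*(z1 - w i) := by linarith
    have hsq12 : 1 ≤ (z1 - z2)^2 := by
      nlinarith [hge1, sq_abs (z1 - z2), abs_nonneg (z1 - z2)]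
    have hquarter : (z1 - w i)^2 = 1/4 := by nlinarith [hub, hsq12, hlin]
    have hδ : (((round (w i) : ℤ) : ℝ) - w i)^2 = 1/4 := by rw [← e₁]; exact hquarter
    have hzw : z1 - w i = 1/2 ∨ z1 - w i = -(1/2) := by
      have hfac : (z1 - w i - 1/2) * (z1 - w i + 1/2) = 0 := by nlinarith
      rcases mul_eq_zero.1 hfac with h | h
      · left; linarith
      · right; linarith
    rcases hzw with h | h
    · exact ⟨zv v₁ i - 1, by push_cast; linarith, hδ⟩
    · exact ⟨zv v₁ i, by push_cast; linarith, hδ⟩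
  choose m hm hq4 using hhalf
  -- conclusion
  have hρval : ρ = ε * sd / 2 := by
    obtain ⟨v₀, hv₀⟩ := hverts_ne
    have hd1 : ρ = ε * Real.sqrt (∑ i, ((zv v₀ i : ℝ) - w i)^2) := by
      rw [← hsph v₀ hv₀]
      conv_lhs => rw [hzv v₀ hv₀, ← hcw]
      rw [dist_phi hR, habs]
    have hsum14 : (∑ i, ((zv v₀ i : ℝ) - w i)^2) = (d:ℝ)/4 := by
      rw [Finset.sum_congr rfl (fun i _ => ((hsq v₀ hv₀ i).symm.trans (hq4 i)))]
      rw [Finset.sum_const]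
      simp
      ring
    rw [hd1, hsum14, show (d:ℝ)/4 = (sd/2)^2 by rw [div_pow, hsd2]; ring,
      Real.sqrt_sq (by positivity)]
    ring
  refine ⟨c, ⟨⟨m, ?_⟩, ?_, ?_⟩, ?_⟩
  · -- c is a half-lattice point
    have hwm : (fun i => ((m i : ℝ) + 1/2)) = w := funext fun i => (hm i).symm
    have : c = phi ε R (fun i => ((m i : ℝ) + 1/2)) := by rw [hwm, hcw]
    exact this
  · -- vertices are at cube corners around c
    intro v hv
    refine ⟨fun i => decide (w i < (zv v i : ℝ)), ?_⟩
    have hsplit : (fun i => (zv v i : ℝ)) = w + (fun i =>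
        if decide (w i < (zv v i : ℝ)) then (1:ℝ)/2 else -(1/2)) := by
      funext i
      have h14 : ((zv v i : ℝ) - w i)^2 = 1/4 := (hsq v hv i).symm.trans (hq4 i)
      have hfac : ((zv v i : ℝ) - w i - 1/2) * ((zv v i : ℝ) - w i + 1/2) = 0 := by nlinarith
      by_cases hlt : w i < (zv v i : ℝ)
      · have hval : (zv v i : ℝ) - w i = 1/2 := by
          rcases mul_eq_zero.1 hfac with h | h
          · linarith
          · linarith
        simp only [Pi.add_apply, decide_eq_true_eq]
        rw [if_pos hlt]
        linarith
      · have hval : (zv v i : ℝ) - w i = -(1/2) := by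
          rcases mul_eq_zero.1 hfac with h | h
          · push_neg at hlt; linarith
          · linarith
        simp only [Pi.add_apply, decide_eq_true_eq]
        rw [if_neg hlt]
        linarith
    have := hzv v hv
    rw [hsplit, phi_add, hcw] at this
    exact this
  · -- vertices on the sphere around c
    intro v hv
    rw [Metric.mem_sphere]
    have := hsph v hv
    rw [this, hρval, hsd]
  · -- uniqueness
    rintro y' ⟨-, -, hy3⟩
    have hy'mem : y' ∈ affineSpan ℝ (Set.range S.points) := by
      rw [hSrange, hspan]
      exact AffineSubspace.mem_top ℝ _ y'
    have huniq := S.eq_circumcenter_of_dist_eq hy'mem (r := ε * sd / 2) (fun k => by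
      have hk : S.points k ∈ T.verts e := by
        rw [← Finset.mem_coe, ← hSrange]
        exact Set.mem_range_self k
      exact Metric.mem_sphere.1 (hy3 (Finset.mem_coe.2 hk)))
    rw [← hc] at huniq
    exact huniq
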